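/- arXiv:0811.3710 — 2 statements merged into one kernel-verified Lean document; each statement's English description precedes it below -/
import Mathlib

section
/- Let g = g_{-1} ⊕ g_0 ⊕ g_1 be a |1|-graded simple Lie algebra with grading element E, Killing form K, and dim g_{-1} = d. Let (e_i) be a basis of g_{-1} and (ε^i) the basis of g_1 dual to it with respect to K, i.e. K(ε^i, e_j) = δ^i_j. Then ∑_{i=1}^d [ε^i, e_i] = (1/2)·E. -/
/-!
Write `N = ad E` and `P₋ = (N² - N)/2`, `P₊ = (N² + N)/2`: these are the projections onto `g₋₁`
and `g₁` along the other pieces, and `N = P₊ - P₋`. For `x ∈ g₀`, `ad x` preserves `g₋₁` and `g₁`,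
so the traces of `P_± ∘ ad x` can be read off in the dual bases `(eᵢ)`, `(εⁱ)`; invariance of the
Killing form turns them into `±K(x, ∑ᵢ [εⁱ, eᵢ])`, whence `K(E, x) = 2 K(x, ∑ᵢ [εⁱ, eᵢ])`.
Both `E` and `∑ᵢ [εⁱ, eᵢ]` are killed by `ad E`, so they are Killing-orthogonal to `g₋₁` and `g₁`.
Hence `∑ᵢ [εⁱ, eᵢ] - E/2` lies in the radical of the Killing form, which is zero for a simple
Lie algebra in characteristic zero by Cartan's criterion.
-/

open LinearMap Submodule

section DualFamily

variable {R V ι : Type*} [CommRing R] [AddCommGroup V] [Module R V] [Fintype ι] [DecidableEq ι]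
  {B : V →ₗ[R] V →ₗ[R] R} {e f : ι → V}

lemma sum_apply_smul_eq_of_mem_span (hdual : ∀ i j, B (f i) (e j) = if i = j then 1 else 0)
    {v : V} (hv : v ∈ span R (Set.range e)) : ∑ j, B (f j) v • e j = v := by
  obtain ⟨c, rfl⟩ := (mem_span_range_iff_exists_fun R).mp hv
  simp [hdual]

lemma trace_eq_sum_apply_of_forall_mem_span [Module.Free R V] [Module.Finite R V]
    (hdual : ∀ i j, B (f i) (e j) = if i = j then 1 else 0) {T : Module.End R V}
    (hT : ∀ v, T v ∈ span R (Set.range e)) : trace R V T = ∑ j, B (f j) (T (e j)) := by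
  have hT_eq : T = ∑ j, (B (f j) ∘ₗ T).smulRight (e j) := by
    ext v
    simp [sum_apply_smul_eq_of_mem_span hdual (hT v)]
  conv_lhs => rw [hT_eq]
  simp

end DualFamily

section Projection

variable {K V : Type*} [Field K] [CharZero K] [AddCommGroup V] [Module K V]

/-- If `N` acts by `-1`, `0`, `1` on three submodules spanning `V`, this is the projection onto
the `-1` part along the other two; `negOneProj (-N)` projects onto the `1` part. -/
def negOneProj (N : Module.End K V) : Module.End K V := (2 : K)⁻¹ • (N * N - N)

lemma negOneProj_neg_sub_negOneProj (N : Module.End K V) :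
    negOneProj (-N) - negOneProj N = N := by
  simp only [negOneProj, neg_mul_neg, sub_neg_eq_add]
  module

lemma negOneProj_apply_of_apply_eq_neg {N : Module.End K V} {v : V} (hv : N v = -v) :
    negOneProj N v = v := by
  simp only [negOneProj, LinearMap.smul_apply, LinearMap.sub_apply, Module.End.mul_apply, hv,
    map_neg, neg_neg]
  module

lemma negOneProj_apply_mem {N : Module.End K V} {p q r : Submodule K V}
    (hp : ∀ v ∈ p, N v = -v) (hq : ∀ v ∈ q, N v = 0) (hr : ∀ v ∈ r, N v = v) {v : V}
    (hv : v ∈ p ⊔ q ⊔ r) : negOneProj N v ∈ p := by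
  obtain ⟨y, hy, c, hc, rfl⟩ := mem_sup.mp hv
  obtain ⟨a, ha, b, hb, rfl⟩ := mem_sup.mp hy
  have hc_zero : negOneProj N c = 0 := by
    simp [negOneProj, hr c hc]
  have hb_zero : negOneProj N b = 0 := by
    simp [negOneProj, hq b hb]
  rw [map_add, map_add, negOneProj_apply_of_apply_eq_neg (hp a ha), hb_zero, hc_zero, add_zero, add_zero]
  exact ha

end Projection

lemma killingForm_eq_zero_of_lie_eq_smul {R L : Type*} [CommRing R] [NoZeroDivisors R]
    [LieRing L] [LieAlgebra R L] {E a b : L} {s t : R} (ha : ⁅E, a⁆ = s • a)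
    (hb : ⁅E, b⁆ = t • b) (hst : s + t ≠ 0) : killingForm R L a b = 0 := by
  have h := LieModule.traceForm_apply_lie_apply R L L a E b
  rw [← lie_skew, ha, hb, map_neg, map_smul, map_smul] at h
  simp only [LinearMap.neg_apply, LinearMap.smul_apply, smul_eq_mul] at h
  have h' : (s + t) * killingForm R L a b = 0 := by linear_combination -h
  exact (mul_eq_zero.mp h').resolve_left hst

section Grading

variable {K L ι : Type*} [Field K] [CharZero K] [LieRing L] [LieAlgebra K L] [Module.Finite K L]
  [Fintype ι] [DecidableEq ι]

lemma killingForm_apply_eq_two_mul_killingForm_sum_lie {gm g0 g1 : Submodule K L}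
    (hsup : gm ⊔ g0 ⊔ g1 = ⊤) {E : L} (hEm : ∀ x ∈ gm, ⁅E, x⁆ = -x)
    (hE0 : ∀ x ∈ g0, ⁅E, x⁆ = 0) (hE1 : ∀ x ∈ g1, ⁅E, x⁆ = x) {e ε : ι → L}
    (hspan_e : span K (Set.range e) = gm) (hspan_ε : span K (Set.range ε) = g1)
    (hdual : ∀ i j, killingForm K L (ε i) (e j) = if i = j then 1 else 0) {x : L}
    (hxm : ∀ y ∈ gm, ⁅x, y⁆ ∈ gm) (hx1 : ∀ y ∈ g1, ⁅x, y⁆ ∈ g1) :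
    killingForm K L E x = 2 * killingForm K L x (∑ i, ⁅ε i, e i⁆) := by
  set N := LieAlgebra.ad K L E
  have hdual_symm : ∀ i j, killingForm K L (e i) (ε j) = if i = j then 1 else 0 := fun i j => by
    rw [LieModule.traceForm_comm, hdual]
    exact if_congr eq_comm rfl rfl
  have h_minus : trace K L (negOneProj N ∘ₗ LieAlgebra.ad K L x) =
      -∑ i, killingForm K L x ⁅ε i, e i⁆ := by
    rw [trace_eq_sum_apply_of_forall_mem_span hdual, ← Finset.sum_neg_distrib]
    · refine Finset.sum_congr rfl fun i _ => ?_
      have hxe : ⁅x, e i⁆ ∈ gm := hxm _ (hspan_e ▸ subset_span (Set.mem_range_self i))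
      rw [comp_apply, LieAlgebra.ad_apply, negOneProj_apply_of_apply_eq_neg (hEm _ hxe),
        ← LieModule.traceForm_apply_lie_apply K L L x (ε i) (e i),
        LieModule.traceForm_apply_lie_apply', neg_neg]
    · exact fun v => hspan_e ▸ negOneProj_apply_mem hEm hE0 hE1 (hsup ▸ mem_top)
  have h_plus : trace K L (negOneProj (-N) ∘ₗ LieAlgebra.ad K L x) =
      ∑ i, killingForm K L x ⁅ε i, e i⁆ := by
    rw [trace_eq_sum_apply_of_forall_mem_span hdual_symm]
    · refine Finset.sum_congr rfl fun i _ => ?_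
      have hxε : ⁅x, ε i⁆ ∈ g1 := hx1 _ (hspan_ε ▸ subset_span (Set.mem_range_self i))
      rw [comp_apply, LieAlgebra.ad_apply, negOneProj_apply_of_apply_eq_neg
        (by rw [LinearMap.neg_apply, LieAlgebra.ad_apply, hE1 _ hxε]),
        LieModule.traceForm_comm, LieModule.traceForm_apply_lie_apply]
    · have hsup' : g1 ⊔ g0 ⊔ gm = ⊤ := by rw [← hsup]; ac_rfl
      exact fun v => hspan_ε ▸ negOneProj_apply_mem (N := -N)
        (fun y hy => by rw [LinearMap.neg_apply, LieAlgebra.ad_apply, hE1 y hy])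
        (fun y hy => by rw [LinearMap.neg_apply, LieAlgebra.ad_apply, hE0 y hy, neg_zero])
        (fun y hy => by rw [LinearMap.neg_apply, LieAlgebra.ad_apply, hEm y hy, neg_neg])
        (hsup' ▸ mem_top)
  rw [killingForm_apply_apply]
  change trace K L (N ∘ₗ _) = _
  rw [← negOneProj_neg_sub_negOneProj N, sub_comp, map_sub, h_plus, h_minus, map_sum]
  ring

end Grading

theorem sum_bracket_dual_basis_eq_half_grading_element_general
    {L : Type*} [LieRing L] [LieAlgebra ℝ L] [LieAlgebra.IsSimple ℝ L]
    [Module.Finite ℝ L]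
    (gm g0 g1 : Submodule ℝ L)
    (hsup : gm ⊔ g0 ⊔ g1 = ⊤)
    (hm0 : ∀ x ∈ gm, ∀ y ∈ g0, ⁅x, y⁆ ∈ gm)
    (hm1 : ∀ x ∈ gm, ∀ y ∈ g1, ⁅x, y⁆ ∈ g0)
    (h01 : ∀ x ∈ g0, ∀ y ∈ g1, ⁅x, y⁆ ∈ g1)
    -- grading element
    (E : L)
    (hEm : ∀ x ∈ gm, ⁅E, x⁆ = -x)
    (hE0 : ∀ x ∈ g0, ⁅E, x⁆ = 0)
    (hE1 : ∀ x ∈ g1, ⁅E, x⁆ = x)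
    -- the basis `(eᵢ)` of `g₋₁` and Killing-dual family `(εⁱ)` in `g₁`
    (d : ℕ) (e ε : Fin d → L)
    (hspan_e : Submodule.span ℝ (Set.range e) = gm)
    (hspan_ε : Submodule.span ℝ (Set.range ε) = g1)
    (hdual : ∀ i j, killingForm ℝ L (ε i) (e j) = if i = j then 1 else 0) :
    ∑ i, ⁅ε i, e i⁆ = (2 : ℝ)⁻¹ • E := by
  set S := ∑ i, ⁅ε i, e i⁆
  have hS : ⁅E, S⁆ = 0 := hE0 S <| sum_mem fun i _ => by
    rw [← lie_skew]
    exact neg_mem <| hm1 _ (hspan_e ▸ subset_span (Set.mem_range_self i)) _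
      (hspan_ε ▸ subset_span (Set.mem_range_self i))
  have hX : ⁅E, S - (2 : ℝ)⁻¹ • E⁆ = (0 : ℝ) • (S - (2 : ℝ)⁻¹ • E) := by simp [hS]
  suffices hker : gm ⊔ g0 ⊔ g1 ≤ ker (killingForm ℝ L (S - (2 : ℝ)⁻¹ • E)) from
    sub_eq_zero.mp <| (LieAlgebra.IsKilling.killingForm_nondegenerate ℝ L).1 _
      fun y => hker (hsup ▸ mem_top)
  refine sup_le (sup_le (fun a ha => ?_) (fun b hb => ?_)) (fun c hc => ?_)
  · exact killingForm_eq_zero_of_lie_eq_smul hX (by rw [hEm a ha, neg_one_smul]) (by norm_num)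
  · have hkey := killingForm_apply_eq_two_mul_killingForm_sum_lie hsup hEm hE0 hE1 hspan_e
      hspan_ε hdual (fun y hy => by rw [← lie_skew]; exact neg_mem (hm0 y hy b hb)) (h01 b hb)
    rw [mem_ker, map_sub, map_smul, LinearMap.sub_apply, LinearMap.smul_apply,
      LieModule.traceForm_comm ℝ L L S, hkey, smul_eq_mul]
    ring
  · exact killingForm_eq_zero_of_lie_eq_smul hX (by rw [hE1 c hc, one_smul]) (by norm_num)

/-- In a `|1|`-graded simple Lie algebra with grading element `E`, if `(eᵢ)` is a basis
of `g₋₁` and `(εⁱ)` the Killing-dual basis of `g₁`, then `∑ᵢ ⁅εⁱ, eᵢ⁆ = (1/2) • E`. -/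
theorem sum_bracket_dual_basis_eq_half_grading_element
    {L : Type*} [LieRing L] [LieAlgebra ℝ L] [LieAlgebra.IsSimple ℝ L]
    [Module.Finite ℝ L]
    (gm g0 g1 : Submodule ℝ L)
    (hsup : gm ⊔ g0 ⊔ g1 = ⊤)
    (hind : ∀ x ∈ gm, ∀ y ∈ g0, ∀ z ∈ g1, x + y + z = 0 → x = 0 ∧ y = 0 ∧ z = 0)
    (hmm : ∀ x ∈ gm, ∀ y ∈ gm, ⁅x, y⁆ = 0)
    (hm0 : ∀ x ∈ gm, ∀ y ∈ g0, ⁅x, y⁆ ∈ gm)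
    (hm1 : ∀ x ∈ gm, ∀ y ∈ g1, ⁅x, y⁆ ∈ g0)
    (h00 : ∀ x ∈ g0, ∀ y ∈ g0, ⁅x, y⁆ ∈ g0)
    (h01 : ∀ x ∈ g0, ∀ y ∈ g1, ⁅x, y⁆ ∈ g1)
    (h11 : ∀ x ∈ g1, ∀ y ∈ g1, ⁅x, y⁆ = 0)
    -- grading element
    (E : L) (hE : E ∈ g0)
    (hEm : ∀ x ∈ gm, ⁅E, x⁆ = -x)
    (hE0 : ∀ x ∈ g0, ⁅E, x⁆ = 0)
    (hE1 : ∀ x ∈ g1, ⁅E, x⁆ = x)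
    -- the basis `(eᵢ)` of `g₋₁` and Killing-dual family `(εⁱ)` in `g₁`
    (d : ℕ) (e ε : Fin d → L)
    (he : ∀ i, e i ∈ gm) (hε : ∀ i, ε i ∈ g1)
    (hspan_e : Submodule.span ℝ (Set.range e) = gm)
    (hspan_ε : Submodule.span ℝ (Set.range ε) = g1)
    (hdual : ∀ i j, killingForm ℝ L (ε i) (e j) = if i = j then 1 else 0) :
    ∑ i, ⁅ε i, e i⁆ = (2 : ℝ)⁻¹ • E :=
  sum_bracket_dual_basis_eq_half_grading_element_general gm g0 g1 hsup hm0 hm1 h01 E hEm hE0 hE1 d e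
    ε hspan_e hspan_ε hdual
end

section
/- Let g = g_{-1} ⊕ g_0 ⊕ g_1 be a |1|-graded simple Lie algebra with g_0 = h_0 ⊕ ℝE and Killing-dual bases (e_i, E, A_j, ε^i) and (ε^i, E/(2d), A_j^*, e_i). Then for all h ∈ g_1, ((1/2)ad(E) + (1/(2d))ad(E)² + ∑_j ad(A_j)∘ad(A_j^*))(h) = h, i.e. the restriction to g_1 of the operator (1/2)ad(E) + (1/(2d))ad(E)² + ∑_j ad(A_j)∘ad(A_j^*) equals the identity on g_1. -/
open LinearMap (trace)

/-- Auxiliary family: the concatenation `(e, A, E, ε)` indexed by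
`Fin d ⊕ Fin n ⊕ Unit ⊕ Fin d`. -/
def casimirFamily {L : Type*} (d n : ℕ) (e ε : Fin d → L) (A : Fin n → L) (E : L) :
    (Fin d ⊕ Fin n ⊕ Unit ⊕ Fin d) → L :=
  Sum.elim e (Sum.elim A (Sum.elim (fun _ => E) ε))

@[simp] lemma casimirFamily_inl {L : Type*} (d n : ℕ) (e ε : Fin d → L) (A : Fin n → L) (E : L)
    (i : Fin d) : casimirFamily d n e ε A E (Sum.inl i) = e i := rfl

@[simp] lemma casimirFamily_inrl {L : Type*} (d n : ℕ) (e ε : Fin d → L) (A : Fin n → L) (E : L)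
    (j : Fin n) : casimirFamily d n e ε A E (Sum.inr (Sum.inl j)) = A j := rfl

@[simp] lemma casimirFamily_inrrl {L : Type*} (d n : ℕ) (e ε : Fin d → L) (A : Fin n → L) (E : L)
    (u : Unit) : casimirFamily d n e ε A E (Sum.inr (Sum.inr (Sum.inl u))) = E := rfl

@[simp] lemma casimirFamily_inrrr {L : Type*} (d n : ℕ) (e ε : Fin d → L) (A : Fin n → L) (E : L)
    (i : Fin d) : casimirFamily d n e ε A E (Sum.inr (Sum.inr (Sum.inr i))) = ε i := rfl

/-- For `h ∈ g₁`: `((1/2) ad(E) + (1/(2d)) ad(E)² + ∑ⱼ ad(Aⱼ) ad(Aⱼ*)) h = h`. -/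
theorem casimir_like_identity_on_g1
    {L : Type*} [LieRing L] [LieAlgebra ℝ L] [LieAlgebra.IsSimple ℝ L]
    [Module.Finite ℝ L]
    (gm g0 g1 h0 : Submodule ℝ L)
    (hsup : gm ⊔ g0 ⊔ g1 = ⊤)
    (hind : ∀ x ∈ gm, ∀ y ∈ g0, ∀ z ∈ g1, x + y + z = 0 → x = 0 ∧ y = 0 ∧ z = 0)
    (hmm : ∀ x ∈ gm, ∀ y ∈ gm, ⁅x, y⁆ = 0)
    (hm0 : ∀ x ∈ gm, ∀ y ∈ g0, ⁅x, y⁆ ∈ gm)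
    (hm1 : ∀ x ∈ gm, ∀ y ∈ g1, ⁅x, y⁆ ∈ g0)
    (h00 : ∀ x ∈ g0, ∀ y ∈ g0, ⁅x, y⁆ ∈ g0)
    (h01 : ∀ x ∈ g0, ∀ y ∈ g1, ⁅x, y⁆ ∈ g1)
    (h11 : ∀ x ∈ g1, ∀ y ∈ g1, ⁅x, y⁆ = 0)
    -- grading element `E`, with `g₀ = h₀ ⊕ ℝ E`
    (E : L) (hE : E ∈ g0)
    (hEm : ∀ x ∈ gm, ⁅E, x⁆ = -x)
    (hE0 : ∀ x ∈ g0, ⁅E, x⁆ = 0)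
    (hE1 : ∀ x ∈ g1, ⁅E, x⁆ = x)
    (hg0 : g0 = h0 ⊔ Submodule.span ℝ {E})
    (hEh0 : E ∉ h0)
    -- Killing-dual bases `(eᵢ, E, Aⱼ, εⁱ)` and `(εⁱ, E/(2d), Aⱼ*, eᵢ)`
    (d n : ℕ) (e ε : Fin d → L) (A As : Fin n → L)
    (he : ∀ i, e i ∈ gm) (hε : ∀ i, ε i ∈ g1)
    (hA : ∀ j, A j ∈ h0) (hAs : ∀ j, As j ∈ h0)
    (hspan_e : Submodule.span ℝ (Set.range e) = gm)
    (hspan_ε : Submodule.span ℝ (Set.range ε) = g1)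
    (hspan_A : Submodule.span ℝ (Set.range A) = h0)
    (hspan_As : Submodule.span ℝ (Set.range As) = h0)
    (hdual_eε : ∀ i j, killingForm ℝ L (ε i) (e j) = if i = j then 1 else 0)
    (hdual_AAs : ∀ j k, killingForm ℝ L (As j) (A k) = if j = k then 1 else 0)
    (hKEE : killingForm ℝ L E E = 2 * (d : ℝ))
    (hKEA : ∀ j, killingForm ℝ L E (A j) = 0)
    (hKEAs : ∀ j, killingForm ℝ L E (As j) = 0)
    -- structure constants of `ad(Aⱼ)` and `ad(Aⱼ*)` on `g₋₁`:
    -- `⁅Aⱼ, eᵢ⁆ = ∑ᵣ a j r i • e r`, `⁅Aⱼ*, eᵢ⁆ = ∑ᵣ as j r i • e r`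
    (a as : Fin n → Fin d → Fin d → ℝ)
    (ha : ∀ j i, ⁅A j, e i⁆ = ∑ r, a j r i • e r)
    (has : ∀ j i, ⁅As j, e i⁆ = ∑ r, as j r i • e r)
    :
    ∀ h ∈ g1,
      (2 : ℝ)⁻¹ • ⁅E, h⁆ + (2 * (d : ℝ))⁻¹ • ⁅E, ⁅E, h⁆⁆ + ∑ j, ⁅A j, ⁅As j, h⁆⁆ = h := by
  
  classical
  intro h hh
  rcases Nat.eq_zero_or_pos d with hd | hd
  · -- degenerate case `d = 0`: then `g₁ = ⊥` and `h = 0`.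
    subst hd
    have hg1 : g1 = ⊥ := by
      rw [← hspan_ε, Set.range_eq_empty, Submodule.span_empty]
    rw [hg1, Submodule.mem_bot] at hh
    subst hh
    simp
  have hdR : (0:ℝ) < (d:ℝ) := by exact_mod_cast hd
  have hd0 : (2 * (d:ℝ)) ≠ 0 := by positivity
  set K : L →ₗ[ℝ] L →ₗ[ℝ] ℝ := killingForm ℝ L with hKdef
  have ksymm : ∀ x y : L, K x y = K y x := fun x y => LieModule.traceForm_comm ℝ L L x y
  have kinv : ∀ x y z : L, K ⁅x, y⁆ z = K x ⁅y, z⁆ := fun x y z =>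
    LieModule.traceForm_apply_lie_apply ℝ L L x y z
  have kinv' : ∀ x y z : L, K ⁅x, y⁆ z = - K y ⁅x, z⁆ := fun x y z =>
    LieModule.traceForm_apply_lie_apply' ℝ L L x y z
  have kcyc : ∀ u x v : L, K ⁅u, x⁆ v = K ⁅x, v⁆ u := fun u x v => by
    rw [kinv u x v, ksymm]
  have lie_sum' : ∀ (x : L) (f : (Fin d ⊕ Fin n ⊕ Unit ⊕ Fin d) → L),
      ⁅x, ∑ k, f k⁆ = ∑ k, ⁅x, f k⁆ := fun x f =>
    map_sum (LieAlgebra.ad ℝ L x) f Finset.univ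
  have lie_sumd : ∀ (x : L) (f : Fin d → L), ⁅x, ∑ k, f k⁆ = ∑ k, ⁅x, f k⁆ := fun x f =>
    map_sum (LieAlgebra.ad ℝ L x) f Finset.univ
  have sum_lied : ∀ (f : Fin d → L) (m : L), ⁅∑ i, f i, m⁆ = ∑ i, ⁅f i, m⁆ := by
    intro f m
    rw [← lie_skew, lie_sumd]
    rw [← Finset.sum_neg_distrib]
    exact Finset.sum_congr rfl fun i _ => lie_skew _ _
  have h0le : h0 ≤ g0 := by rw [hg0]; exact le_sup_left
  -- reversed bracket membership
  have h0m : ∀ x ∈ g0, ∀ y ∈ gm, ⁅x, y⁆ ∈ gm := fun x hx y hy => by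
    rw [← lie_skew]; exact gm.neg_mem (hm0 y hy x hx)
  have h1m : ∀ x ∈ g1, ∀ y ∈ gm, ⁅x, y⁆ ∈ g0 := fun x hx y hy => by
    rw [← lie_skew]; exact g0.neg_mem (hm1 y hy x hx)
  have h10 : ∀ x ∈ g1, ∀ y ∈ g0, ⁅x, y⁆ ∈ g1 := fun x hx y hy => by
    rw [← lie_skew]; exact g1.neg_mem (h01 y hy x hx)
  -- decomposition of an arbitrary element
  have hdec : ∀ z : L, ∃ u ∈ gm, ∃ v ∈ g0, ∃ w ∈ g1, z = u + v + w := by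
    intro z
    have hz : z ∈ gm ⊔ g0 ⊔ g1 := by rw [hsup]; trivial
    rw [Submodule.mem_sup] at hz
    obtain ⟨y', hy', w, hw, hzw⟩ := hz
    rw [Submodule.mem_sup] at hy'
    obtain ⟨u, hu, v, hv, huv⟩ := hy'
    exact ⟨u, hu, v, hv, w, hw, by rw [← hzw, ← huv]⟩
  -- the Killing form vanishes on pairs whose `ad`-composite is nilpotent
  have korth : ∀ x y : L, (∀ z : L, ⁅x, ⁅y, ⁅x, ⁅y, ⁅x, ⁅y, z⁆⁆⁆⁆⁆⁆ = 0) → K x y = 0 := by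
    intro x y hnil
    have hN : ((LieAlgebra.ad ℝ L x) ∘ₗ (LieAlgebra.ad ℝ L y)) ^ 3 = 0 := by
      ext z
      have := hnil z
      simpa [pow_succ, Module.End.mul_apply, LinearMap.comp_apply, LieAlgebra.ad_apply] using this
    have hnilt : IsNilpotent
        (LinearMap.trace ℝ L ((LieAlgebra.ad ℝ L x) ∘ₗ (LieAlgebra.ad ℝ L y))) :=
      LinearMap.isNilpotent_trace_of_isNilpotent ⟨3, hN⟩
    rw [hKdef, killingForm_apply_apply]
    exact hnilt.eq_zero
  -- graded orthogonality
  have korth_mm : ∀ x ∈ gm, ∀ y ∈ gm, K x y = 0 := by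
    intro x hx y hy
    apply korth
    intro z
    obtain ⟨u, hu, v, hv, w, hw, rfl⟩ := hdec z
    have st0 : ∀ p ∈ gm, (⁅x, ⁅y, p⁆⁆ : L) = 0 := fun p hp => by
      rw [hmm y hy p hp, lie_zero]
    have st0' : ∀ p ∈ g0, (⁅x, ⁅y, p⁆⁆ : L) = 0 := fun p hp =>
      hmm x hx _ (hm0 y hy p hp)
    have st1 : ∀ p ∈ g1, (⁅x, ⁅y, p⁆⁆ : L) ∈ gm := fun p hp =>
      hm0 x hx _ (hm1 y hy p hp)
    have c1 : (⁅x, ⁅y, u + v + w⁆⁆ : L) = ⁅x, ⁅y, w⁆⁆ := by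
      simp only [lie_add]; rw [st0 u hu, st0' v hv]; abel
    rw [c1, st0 _ (st1 w hw), lie_zero, lie_zero]
  have korth_m0 : ∀ x ∈ gm, ∀ y ∈ g0, K x y = 0 := by
    intro x hx y hy
    apply korth
    intro z
    obtain ⟨u, hu, v, hv, w, hw, rfl⟩ := hdec z
    have st0 : ∀ p ∈ gm, (⁅x, ⁅y, p⁆⁆ : L) = 0 := fun p hp =>
      hmm x hx _ (h0m y hy p hp)
    have st1 : ∀ p ∈ g0, (⁅x, ⁅y, p⁆⁆ : L) ∈ gm := fun p hp =>
      hm0 x hx _ (h00 y hy p hp)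
    have st2 : ∀ p ∈ g1, (⁅x, ⁅y, p⁆⁆ : L) ∈ g0 := fun p hp =>
      hm1 x hx _ (h01 y hy p hp)
    have c1 : (⁅x, ⁅y, u + v + w⁆⁆ : L) = ⁅x, ⁅y, v⁆⁆ + ⁅x, ⁅y, w⁆⁆ := by
      simp only [lie_add]; rw [st0 u hu]; abel
    have c2 : (⁅x, ⁅y, ⁅x, ⁅y, v⁆⁆ + ⁅x, ⁅y, w⁆⁆⁆⁆ : L) = ⁅x, ⁅y, ⁅x, ⁅y, w⁆⁆⁆⁆ := by
      simp only [lie_add]; rw [st0 _ (st1 v hv)]; abel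
    rw [c1, c2, st0 _ (st1 _ (st2 w hw))]
  have korth_01 : ∀ x ∈ g0, ∀ y ∈ g1, K x y = 0 := by
    intro x hx y hy
    apply korth
    intro z
    obtain ⟨u, hu, v, hv, w, hw, rfl⟩ := hdec z
    have st0 : ∀ p ∈ g1, (⁅x, ⁅y, p⁆⁆ : L) = 0 := fun p hp => by
      rw [h11 y hy p hp, lie_zero]
    have st1 : ∀ p ∈ gm, (⁅x, ⁅y, p⁆⁆ : L) ∈ g0 := fun p hp =>
      h00 x hx _ (h1m y hy p hp)
    have st2 : ∀ p ∈ g0, (⁅x, ⁅y, p⁆⁆ : L) ∈ g1 := fun p hp =>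
      h01 x hx _ (h10 y hy p hp)
    have c1 : (⁅x, ⁅y, u + v + w⁆⁆ : L) = ⁅x, ⁅y, u⁆⁆ + ⁅x, ⁅y, v⁆⁆ := by
      simp only [lie_add]; rw [st0 w hw]; abel
    have c2 : (⁅x, ⁅y, ⁅x, ⁅y, u⁆⁆ + ⁅x, ⁅y, v⁆⁆⁆⁆ : L) = ⁅x, ⁅y, ⁅x, ⁅y, u⁆⁆⁆⁆ := by
      simp only [lie_add]; rw [st0 _ (st2 v hv)]; abel
    rw [c1, c2, st0 _ (st2 _ (st1 u hu))]
  have korth_11 : ∀ x ∈ g1, ∀ y ∈ g1, K x y = 0 := by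
    intro x hx y hy
    apply korth
    intro z
    obtain ⟨u, hu, v, hv, w, hw, rfl⟩ := hdec z
    have st0 : ∀ p ∈ g1, (⁅x, ⁅y, p⁆⁆ : L) = 0 := fun p hp => by
      rw [h11 y hy p hp, lie_zero]
    have st0' : ∀ p ∈ g0, (⁅x, ⁅y, p⁆⁆ : L) = 0 := fun p hp =>
      h11 x hx _ (h10 y hy p hp)
    have st1 : ∀ p ∈ gm, (⁅x, ⁅y, p⁆⁆ : L) ∈ g1 := fun p hp =>
      h10 x hx _ (h1m y hy p hp)
    have c1 : (⁅x, ⁅y, u + v + w⁆⁆ : L) = ⁅x, ⁅y, u⁆⁆ := by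
      simp only [lie_add]; rw [st0' v hv, st0 w hw]; abel
    rw [c1, st0 _ (st1 u hu), lie_zero, lie_zero]
  -- derived orthogonality
  have korth_0m : ∀ x ∈ g0, ∀ y ∈ gm, K x y = 0 := fun x hx y hy => by
    rw [ksymm]; exact korth_m0 y hy x hx
  have korth_10 : ∀ x ∈ g1, ∀ y ∈ g0, K x y = 0 := fun x hx y hy => by
    rw [ksymm]; exact korth_01 y hy x hx
  -- the dual families
  set b : (Fin d ⊕ Fin n ⊕ Unit ⊕ Fin d) → L :=
    casimirFamily d n e ε A E with hbdef
  set bs : (Fin d ⊕ Fin n ⊕ Unit ⊕ Fin d) → L :=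
    casimirFamily d n ε e As ((2 * (d:ℝ))⁻¹ • E) with hbsdef
  have hpair : ∀ i j, K (b i) (bs j) = if i = j then 1 else 0 := by
    rintro (i | i | i | i) (j | j | j | j) <;>
      simp only [hbdef, hbsdef, casimirFamily_inl, casimirFamily_inrl, casimirFamily_inrrl,
        casimirFamily_inrrr]
    · simp only [Sum.inl.injEq]
      rw [ksymm, hdual_eε]
      exact if_congr eq_comm rfl rfl
    · rw [if_neg (by simp), korth_m0 _ (he i) _ (h0le (hAs j))]
    · rw [if_neg (by simp), map_smul, smul_eq_mul, korth_m0 _ (he i) _ hE, mul_zero]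
    · rw [if_neg (by simp), korth_mm _ (he i) _ (he j)]
    · rw [if_neg (by simp), korth_01 _ (h0le (hA i)) _ (hε j)]
    · simp only [Sum.inr.injEq, Sum.inl.injEq]
      rw [ksymm, hdual_AAs]
      exact if_congr eq_comm rfl rfl
    · rw [if_neg (by simp), map_smul, smul_eq_mul, ksymm, hKEA, mul_zero]
    · rw [if_neg (by simp), korth_0m _ (h0le (hA i)) _ (he j)]
    · rw [if_neg (by simp), korth_01 _ hE _ (hε j)]
    · rw [if_neg (by simp), hKEAs j]
    · rw [if_pos trivial, map_smul, smul_eq_mul, hKEE, inv_mul_cancel₀ hd0]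
    · rw [if_neg (by simp), korth_0m _ hE _ (he j)]
    · rw [if_neg (by simp), korth_11 _ (hε i) _ (hε j)]
    · rw [if_neg (by simp), korth_10 _ (hε i) _ (h0le (hAs j))]
    · rw [if_neg (by simp), map_smul, smul_eq_mul, korth_10 _ (hε i) _ hE, mul_zero]
    · simp only [Sum.inr.injEq]
      rw [hdual_eε]
  have hpair' : ∀ i j, K (bs i) (b j) = if i = j then 1 else 0 := fun i j => by
    rw [ksymm, hpair j i]; exact if_congr eq_comm rfl rfl
  -- linear independence and spanning
  have hli : LinearIndependent ℝ b := by
    rw [Fintype.linearIndependent_iff]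
    intro g hg j
    have hgj := congrArg (fun z => K z (bs j)) hg
    simp only [map_sum, LinearMap.sum_apply, map_smul, LinearMap.smul_apply,
      smul_eq_mul, map_zero, LinearMap.zero_apply] at hgj
    rw [Finset.sum_congr rfl (fun i _ => by rw [hpair i j])] at hgj
    simpa [Finset.sum_ite_eq'] using hgj
  have hli' : LinearIndependent ℝ bs := by
    rw [Fintype.linearIndependent_iff]
    intro g hg j
    have hgj := congrArg (fun z => K z (b j)) hg
    simp only [map_sum, LinearMap.sum_apply, map_smul, LinearMap.smul_apply,
      smul_eq_mul, map_zero, LinearMap.zero_apply] at hgj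
    rw [Finset.sum_congr rfl (fun i _ => by rw [hpair' i j])] at hgj
    simpa [Finset.sum_ite_eq'] using hgj
  have hsp : ⊤ ≤ Submodule.span ℝ (Set.range b) := by
    rw [hbdef]
    unfold casimirFamily
    rw [Set.Sum.elim_range, Set.Sum.elim_range, Set.Sum.elim_range, Set.range_const,
      Submodule.span_union, Submodule.span_union, Submodule.span_union,
      hspan_e, hspan_A, hspan_ε]
    rw [← hsup, hg0]
    simp only [sup_assoc, le_refl]
  have hsp' : ⊤ ≤ Submodule.span ℝ (Set.range bs) := by
    rw [hbsdef]
    unfold casimirFamily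
    rw [Set.Sum.elim_range, Set.Sum.elim_range, Set.Sum.elim_range, Set.range_const,
      Submodule.span_union, Submodule.span_union, Submodule.span_union,
      hspan_e, hspan_As, hspan_ε]
    have hsm : Submodule.span ℝ ({(2 * (d:ℝ))⁻¹ • E} : Set L) = Submodule.span ℝ {E} := by
      have : IsUnit ((2 * (d:ℝ))⁻¹) := (isUnit_iff_ne_zero).2 (by positivity)
      exact Submodule.span_singleton_smul_eq this E
    rw [hsm]
    have heq : g1 ⊔ (h0 ⊔ (Submodule.span ℝ {E} ⊔ gm)) = ⊤ := by
      calc g1 ⊔ (h0 ⊔ (Submodule.span ℝ {E} ⊔ gm))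
          = g1 ⊔ ((h0 ⊔ Submodule.span ℝ {E}) ⊔ gm) := by rw [sup_assoc]
        _ = g1 ⊔ (gm ⊔ (h0 ⊔ Submodule.span ℝ {E})) := by
            rw [sup_comm (h0 ⊔ Submodule.span ℝ {E}) gm]
        _ = gm ⊔ (h0 ⊔ Submodule.span ℝ {E}) ⊔ g1 := by
            rw [sup_comm g1 (gm ⊔ (h0 ⊔ Submodule.span ℝ {E}))]
        _ = ⊤ := by rw [← hg0]; exact hsup
    rw [heq]
  -- the two bases
  obtain ⟨B, hB⟩ : ∃ B : Module.Basis (Fin d ⊕ Fin n ⊕ Unit ⊕ Fin d) ℝ L, ∀ i, B i = b i :=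
    ⟨Module.Basis.mk hli hsp, fun i => Module.Basis.mk_apply hli hsp i⟩
  obtain ⟨B', hB'⟩ : ∃ B' : Module.Basis (Fin d ⊕ Fin n ⊕ Unit ⊕ Fin d) ℝ L, ∀ i, B' i = bs i :=
    ⟨Module.Basis.mk hli' hsp', fun i => Module.Basis.mk_apply hli' hsp' i⟩
  -- coordinates via the Killing form
  have hrepr : ∀ (x : L) i, B.repr x i = K x (bs i) := by
    intro x i
    have hco : (B.coord i : L →ₗ[ℝ] ℝ) = (LinearMap.flip K) (bs i) := by
      apply B.ext
      intro j
      rw [Module.Basis.coord_apply, Module.Basis.repr_self, LinearMap.flip_apply, hB, hpair,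
        Finsupp.single_apply]
    calc B.repr x i = B.coord i x := (Module.Basis.coord_apply _ _ _).symm
    _ = K x (bs i) := by rw [hco, LinearMap.flip_apply]
  have hrepr' : ∀ (x : L) i, B'.repr x i = K x (b i) := by
    intro x i
    have hco : (B'.coord i : L →ₗ[ℝ] ℝ) = (LinearMap.flip K) (b i) := by
      apply B'.ext
      intro j
      rw [Module.Basis.coord_apply, Module.Basis.repr_self, LinearMap.flip_apply, hB', hpair',
        Finsupp.single_apply]
    calc B'.repr x i = B'.coord i x := (Module.Basis.coord_apply _ _ _).symm
    _ = K x (b i) := by rw [hco, LinearMap.flip_apply]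
  -- expansions
  have expB : ∀ z : L, z = ∑ i, K z (bs i) • b i := by
    intro z
    conv_lhs => rw [← B.sum_repr z]
    exact Finset.sum_congr rfl fun i _ => by rw [hrepr, hB]
  have expB' : ∀ z : L, z = ∑ i, K z (b i) • bs i := by
    intro z
    conv_lhs => rw [← B'.sum_repr z]
    exact Finset.sum_congr rfl fun i _ => by rw [hrepr', hB']
  -- nondegeneracy against the first family
  have hnd : ∀ x : L, (∀ i, K x (b i) = 0) → x = 0 := by
    intro x hx
    calc x = ∑ i, K x (b i) • bs i := expB' x
    _ = 0 := by simp [hx]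
  -- trace formula
  have htr : ∀ T : L →ₗ[ℝ] L, LinearMap.trace ℝ L T = ∑ i, K (T (b i)) (bs i) := by
    intro T
    rw [LinearMap.trace_eq_matrix_trace ℝ B T, Matrix.trace]
    refine Finset.sum_congr rfl fun i _ => ?_
    rw [Matrix.diag_apply, LinearMap.toMatrix_apply, hrepr, hB]
  have hKtr : ∀ x y : L, K x y = ∑ i, K ⁅x, ⁅y, b i⁆⁆ (bs i) := by
    intro x y
    rw [hKdef, killingForm_apply_apply, htr]
    exact Finset.sum_congr rfl fun i _ => by
      simp [LinearMap.comp_apply, LieAlgebra.ad_apply, hKdef]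
  -- vanishing of the `g₋₁`-diagonal of `ad(Aⱼ)`, `ad(Aⱼ*)`
  have diagsum : ∀ (C : Fin n → L) (c : Fin n → Fin d → Fin d → ℝ),
      (∀ j, C j ∈ h0) → (∀ j i, ⁅C j, e i⁆ = ∑ r, c j r i • e r) →
      (∀ j, K E (C j) = 0) → ∀ k, ∑ i, c k i i = 0 := by
    intro C c hC hc hKC k
    have h1 : K (C k) E = 0 := by rw [ksymm]; exact hKC k
    have h2 := hKtr (C k) E
    have blk1 : ∀ i : Fin d, K ⁅C k, ⁅E, e i⁆⁆ (ε i) = -(c k i i) := by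
      intro i
      rw [hEm _ (he i), lie_neg, map_neg, LinearMap.neg_apply, hc, map_sum,
        LinearMap.sum_apply]
      have hterm : ∀ r : Fin d, K (c k r i • e r) (ε i) = if i = r then c k r i else 0 :=
        fun r => by rw [map_smul, LinearMap.smul_apply, smul_eq_mul, ksymm, hdual_eε, mul_ite,
          mul_one, mul_zero]
      rw [Finset.sum_congr rfl fun r _ => hterm r, Finset.sum_ite_eq]
      simp
    have blk2 : ∀ j : Fin n, K ⁅C k, ⁅E, A j⁆⁆ (As j) = 0 := fun j => by
      rw [hE0 _ (h0le (hA j)), lie_zero, map_zero, LinearMap.zero_apply]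
    have blk3 : K ⁅C k, ⁅E, E⁆⁆ ((2 * (d:ℝ))⁻¹ • E) = 0 := by
      rw [lie_self, lie_zero, map_zero, LinearMap.zero_apply]
    have blk4 : ∀ i : Fin d, K ⁅C k, ⁅E, ε i⁆⁆ (e i) = -(c k i i) := by
      intro i
      rw [hE1 _ (hε i), kinv' (C k) (ε i) (e i), hc, map_sum]
      have hterm : ∀ r : Fin d, K (ε i) (c k r i • e r) = if i = r then c k r i else 0 :=
        fun r => by rw [map_smul, smul_eq_mul, hdual_eε, mul_ite, mul_one, mul_zero]
      rw [Finset.sum_congr rfl fun r _ => hterm r, Finset.sum_ite_eq]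
      simp
    rw [h1] at h2
    rw [Fintype.sum_sum_type, Fintype.sum_sum_type, Fintype.sum_sum_type] at h2
    simp only [hbdef, hbsdef, casimirFamily_inl, casimirFamily_inrl, casimirFamily_inrrl,
      casimirFamily_inrrr] at h2
    rw [Finset.sum_congr rfl fun i _ => blk1 i, Finset.sum_congr rfl fun j _ => blk2 j,
      Finset.sum_congr rfl fun (u : Unit) _ => blk3,
      Finset.sum_congr rfl fun i _ => blk4 i] at h2
    simp only [Finset.sum_const_zero, Finset.sum_neg_distrib, zero_add, add_zero] at h2
    linarith
  have tA : ∀ k, ∑ i, a k i i = 0 := diagsum A a hA ha hKEA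
  have tAs : ∀ k, ∑ i, as k i i = 0 := diagsum As as hAs has hKEAs
  -- the element `S = ∑ᵢ ⁅εᵢ, eᵢ⁆` equals `E/2`
  have hSmem : (∑ i, ⁅ε i, e i⁆ : L) ∈ g0 :=
    Submodule.sum_mem _ fun i _ => h1m _ (hε i) _ (he i)
  have hS : (∑ i, ⁅ε i, e i⁆ : L) = (2:ℝ)⁻¹ • E := by
    have hbm : ∀ (CC : Fin n → L) (cc : Fin n → Fin d → Fin d → ℝ),
        (∀ j i, ⁅CC j, e i⁆ = ∑ r, cc j r i • e r) → (∀ k, ∑ i, cc k i i = 0) →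
        ∀ j, K (∑ i, ⁅ε i, e i⁆) (CC j) = 0 := by
      intro CC cc hcc tcc j
      rw [map_sum, LinearMap.sum_apply]
      have hterm : ∀ i : Fin d, K ⁅ε i, e i⁆ (CC j) = -(cc j i i) := by
        intro i
        rw [kinv (ε i) (e i) (CC j), ← lie_skew, map_neg, hcc, map_sum]
        have hterm2 : ∀ r : Fin d, K (ε i) (cc j r i • e r) = if i = r then cc j r i else 0 :=
          fun r => by rw [map_smul, smul_eq_mul, hdual_eε, mul_ite, mul_one, mul_zero]
        rw [Finset.sum_congr rfl fun r _ => hterm2 r, Finset.sum_ite_eq]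
        simp
      rw [Finset.sum_congr rfl fun i _ => hterm i, Finset.sum_neg_distrib, tcc j, neg_zero]
    have hzE : K (∑ i, ⁅ε i, e i⁆) E = (d:ℝ) := by
      rw [map_sum, LinearMap.sum_apply]
      have hterm : ∀ i : Fin d, K ⁅ε i, e i⁆ E = 1 := by
        intro i
        rw [kinv (ε i) (e i) E, ← lie_skew, hEm _ (he i), neg_neg, hdual_eε, if_pos rfl]
      rw [Finset.sum_congr rfl fun i _ => hterm i]
      simp
    have hz0 : (∑ i, ⁅ε i, e i⁆ : L) - (2:ℝ)⁻¹ • E = 0 := by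
      apply hnd
      rintro (i | i | i | i) <;>
        simp only [hbdef, casimirFamily_inl, casimirFamily_inrl, casimirFamily_inrrl,
          casimirFamily_inrrr] <;>
        rw [map_sub, LinearMap.sub_apply]
      · rw [korth_0m _ hSmem _ (he i), map_smul, LinearMap.smul_apply, smul_eq_mul,
          korth_0m _ hE _ (he i), mul_zero, sub_zero]
      · rw [hbm A a ha tA i, map_smul, LinearMap.smul_apply, smul_eq_mul, hKEA,
          mul_zero, sub_zero]
      · rw [hzE, map_smul, LinearMap.smul_apply, smul_eq_mul, hKEE]
        ring
      · rw [korth_01 _ hSmem _ (hε i), map_smul, LinearMap.smul_apply, smul_eq_mul,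
          korth_01 _ hE _ (hε i), mul_zero, sub_zero]
    exact sub_eq_zero.mp hz0
  -- the Casimir operator is the identity
  have hCas : ∀ x : L, (∑ i, ⁅b i, ⁅bs i, x⁆⁆ : L) = x := by
    intro x
    have key : ∀ y : L, K (∑ i, ⁅b i, ⁅bs i, x⁆⁆) y = K x y := by
      intro y
      have lhs_eq : K (∑ i, ⁅b i, ⁅bs i, x⁆⁆) y
          = ∑ i, ∑ k, K ⁅x, b k⁆ (bs i) * K ⁅y, b i⁆ (bs k) := by
        rw [map_sum, LinearMap.sum_apply]
        refine Finset.sum_congr rfl fun i _ => ?_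
        have e1 : (⁅bs i, x⁆ : L) = ∑ k, K ⁅x, b k⁆ (bs i) • bs k := by
          conv_lhs => rw [expB' ⁅bs i, x⁆]
          exact Finset.sum_congr rfl fun k _ => by rw [kcyc (bs i) x (b k)]
        rw [e1, lie_sum', map_sum, LinearMap.sum_apply]
        refine Finset.sum_congr rfl fun k _ => ?_
        rw [lie_smul, map_smul, LinearMap.smul_apply, smul_eq_mul]
        congr 1
        rw [kcyc (b i) (bs k) y, kcyc (bs k) y (b i)]
      have rhs_eq : K x y = ∑ i, ∑ k, K ⁅y, b i⁆ (bs k) * K ⁅x, b k⁆ (bs i) := by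
        rw [hKtr x y]
        refine Finset.sum_congr rfl fun i _ => ?_
        have e2 : (⁅y, b i⁆ : L) = ∑ k, K ⁅y, b i⁆ (bs k) • b k := expB ⁅y, b i⁆
        calc K ⁅x, ⁅y, b i⁆⁆ (bs i)
            = K ⁅x, ∑ k, K ⁅y, b i⁆ (bs k) • b k⁆ (bs i) := by rw [← e2]
          _ = ∑ k, K ⁅y, b i⁆ (bs k) * K ⁅x, b k⁆ (bs i) := by
              rw [lie_sum', map_sum, LinearMap.sum_apply]
              exact Finset.sum_congr rfl fun k _ => by
                rw [lie_smul, map_smul, LinearMap.smul_apply, smul_eq_mul]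
      rw [lhs_eq, rhs_eq]
      exact Finset.sum_congr rfl fun i _ => Finset.sum_congr rfl fun k _ => mul_comm _ _
    have hz : ∀ i, K ((∑ i, ⁅b i, ⁅bs i, x⁆⁆) - x) (b i) = 0 := fun i => by
      rw [map_sub, LinearMap.sub_apply, key (b i), sub_self]
    exact sub_eq_zero.mp (hnd _ hz)
  -- conclusion
  have hfin := hCas h
  rw [Fintype.sum_sum_type, Fintype.sum_sum_type, Fintype.sum_sum_type] at hfin
  simp only [hbdef, hbsdef, casimirFamily_inl, casimirFamily_inrl, casimirFamily_inrrl,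
    casimirFamily_inrrr] at hfin
  have f1 : ∀ i : Fin d, (⁅e i, ⁅ε i, h⁆⁆ : L) = 0 := fun i => by
    rw [h11 _ (hε i) _ hh, lie_zero]
  have f2 : (∑ _ : Unit, (⁅E, ⁅(2 * (d:ℝ))⁻¹ • E, h⁆⁆ : L))
      = (2 * (d:ℝ))⁻¹ • ⁅E, ⁅E, h⁆⁆ := by
    rw [Fintype.sum_unique, smul_lie, lie_smul]
  have f3 : (∑ i, (⁅ε i, ⁅e i, h⁆⁆ : L)) = (2:ℝ)⁻¹ • ⁅E, h⁆ := by
    have hj : ∀ i : Fin d, (⁅ε i, ⁅e i, h⁆⁆ : L) = ⁅⁅ε i, e i⁆, h⁆ := fun i => by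
      rw [lie_lie, h11 _ (hε i) _ hh, lie_zero, sub_zero]
    rw [Finset.sum_congr rfl fun i _ => hj i, ← sum_lied, hS, smul_lie]
  rw [Finset.sum_congr rfl fun i _ => f1 i, Finset.sum_const_zero, f2, f3, zero_add] at hfin
  conv_rhs => rw [← hfin]
  abel
end
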